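/- Define recursively h₀ = h and h_{k+1}(x) = (∇h_k(x))ᵀ g(x) + (1/2) tr(σᵀ B(x)ᵀ (∇²h_k(x)) B(x) σ) + h_k(x). Fix r ≥ 1 and x ∈ ℝ^n with h_k(x) ≥ 0 for all k = 0,…,r, and suppose u ∈ ℝ^p satisfies (∇h_k(x))ᵀ B(x) u ≥ 0 for all k < r. Then for every k = 0,…,r−1, the ZCBF inequality (∇h_k(x))ᵀ(g(x)+B(x)u) + (1/2) tr(σᵀ B(x)ᵀ (∇²h_k(x)) B(x) σ) ≥ −h_k(x) holds. -/
import Mathlib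


open Matrix

/-- Gradient of `h` at `x` as a vector, via the Fréchet derivative. -/
noncomputable def vecGrad {n : ℕ} (h : (Fin n → ℝ) → ℝ) (x : Fin n → ℝ) : Fin n → ℝ :=
  fun i => fderiv ℝ h x (Pi.single i 1)

/-- Hessian matrix of `h` at `x`, via iterated Fréchet derivatives. -/
noncomputable def hessMat {n : ℕ} (h : (Fin n → ℝ) → ℝ) (x : Fin n → ℝ) :
    Matrix (Fin n) (Fin n) ℝ :=
  Matrix.of fun i j => fderiv ℝ (fun y => fderiv ℝ h y (Pi.single j 1)) x (Pi.single i 1)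

/-- The recursively constructed high-degree barriers
`h₀ = h`, `h_{k+1} = (∇h_k)ᵀ g + (1/2) tr(σᵀ Bᵀ (∇²h_k) B σ) + h_k`. -/
noncomputable def barrierSeq {n p : ℕ} (g : (Fin n → ℝ) → (Fin n → ℝ))
    (B : (Fin n → ℝ) → Matrix (Fin n) (Fin p) ℝ) (σ : Matrix (Fin p) (Fin p) ℝ)
    (h : (Fin n → ℝ) → ℝ) : ℕ → (Fin n → ℝ) → ℝ
  | 0 => h
  | k + 1 => fun x =>
      vecGrad (barrierSeq g B σ h k) x ⬝ᵥ g x +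
        (1 / 2) * Matrix.trace (σᵀ * (B x)ᵀ * hessMat (barrierSeq g B σ h k) x * B x * σ) +
        barrierSeq g B σ h k x

/-- The induction chain of Theorem 1: if `h_k(x) ≥ 0` for `k = 0,…,r` and the control
terms `(∇h_k)ᵀ B u` are nonnegative for `k < r`, then the ZCBF inequality holds at
every degree `k < r`. -/
theorem stmt_9 {n p : ℕ} (h : (Fin n → ℝ) → ℝ) {r : ℕ} (hr : 1 ≤ r)
    (hC : ContDiff ℝ (2 * r) h)
    (g : (Fin n → ℝ) → (Fin n → ℝ)) (B : (Fin n → ℝ) → Matrix (Fin n) (Fin p) ℝ)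
    (σ : Matrix (Fin p) (Fin p) ℝ) (x : Fin n → ℝ) (u : Fin p → ℝ)
    (hnonneg : ∀ k ≤ r, 0 ≤ barrierSeq g B σ h k x)
    (hctrl : ∀ k < r, 0 ≤ vecGrad (barrierSeq g B σ h k) x ⬝ᵥ (B x).mulVec u) :
    ∀ k < r,
      vecGrad (barrierSeq g B σ h k) x ⬝ᵥ (g x + (B x).mulVec u) +
        (1 / 2) * Matrix.trace (σᵀ * (B x)ᵀ * hessMat (barrierSeq g B σ h k) x * B x * σ) ≥
        -(barrierSeq g B σ h k x) := by
  intro k hk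
  have h1 : 0 ≤ barrierSeq g B σ h (k+1) x := hnonneg (k+1) hk
  have h2 := hctrl k hk
  simp only [barrierSeq] at h1
  rw [dotProduct_add]
  linarith
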